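/- arXiv:1905.06669 — 5 statements merged into one kernel-verified Lean document; each statement's English description precedes it below -/
import Mathlib

section
/- Let X be a metrizable topological space, Γ a group acting on X by homeomorphisms, and 𝒰 an open cover of X such that for every U ∈ 𝒰, the orbit ΓU = {gU : g ∈ Γ} has no accumulation point in X (i.e., no point x ∈ X has the property that every neighborhood of x meets gU for infinitely many g). Then the action is properly discontinuous: for every compact K ⊆ X, only finitely many g ∈ Γ satisfy gK ∩ K ≠ ∅. -/
open Pointwise Set

/-!
If no orbit `Γ • U` of a member of the cover accumulates, each family `g ↦ g • U` is locally
finite, so only finitely many translates of `U` meet a compact set `K`. Covering `K` by finitely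
many members of the cover, `g • K` can meet `K` only if one of those finitely many `g • U` does.
-/

theorem setOf_smul_inter_nonempty_subset_biUnion {Γ X : Type*} [SMul Γ X]
    {K L : Set X} {T : Set (Set X)} (hK : K ⊆ ⋃ U ∈ T, U) :
    {g : Γ | (g • K ∩ L).Nonempty} ⊆ ⋃ U ∈ T, {g : Γ | (g • U ∩ L).Nonempty} := by
  rintro g ⟨_, ⟨k, hk, rfl⟩, hkL⟩
  obtain ⟨U, hUT, hkU⟩ := mem_iUnion₂.mp (hK hk)
  exact mem_iUnion₂.mpr ⟨U, hUT, g • k, smul_mem_smul_set hkU, hkL⟩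

theorem stmt_1_general {Γ X : Type*} [Group Γ] [TopologicalSpace X]
    [MulAction Γ X]
    (𝒰 : Set (Set X)) (hopen : ∀ U ∈ 𝒰, IsOpen U) (hcover : ⋃₀ 𝒰 = Set.univ)
    (hacc : ∀ U ∈ 𝒰, ¬ ∃ x : X, ∀ V ∈ nhds x, {g : Γ | ((g • U) ∩ V).Nonempty}.Infinite) :
    ∀ K : Set X, IsCompact K → {g : Γ | ((g • K) ∩ K).Nonempty}.Finite := by
  intro K hK
  have hlocFin : ∀ U ∈ 𝒰, LocallyFinite fun g : Γ => g • U := fun U hU x => by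
    simpa only [not_forall, exists_prop, not_infinite] using not_exists.mp (hacc U hU) x
  have hK𝒰 : K ⊆ ⋃ U ∈ 𝒰, U := by
    rw [← sUnion_eq_biUnion, hcover]
    exact subset_univ K
  obtain ⟨T, hT𝒰, hTfin, hKT⟩ := hK.elim_finite_subcover_image hopen hK𝒰
  refine (hTfin.biUnion fun U hU => ?_).subset (setOf_smul_inter_nonempty_subset_biUnion hKT)
  exact (hlocFin U (hT𝒰 hU)).finite_nonempty_inter_compact hK

/-- If a group acts by homeomorphisms on a metrizable space and there is an open cover
`𝒰` such that no orbit `Γ U` of a member of the cover has an accumulation point, then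
the action is properly discontinuous. -/
theorem stmt_1 {Γ X : Type*} [Group Γ] [TopologicalSpace X]
    [TopologicalSpace.MetrizableSpace X] [MulAction Γ X]
    (hcont : ∀ g : Γ, Continuous fun x : X => g • x)
    (𝒰 : Set (Set X)) (hopen : ∀ U ∈ 𝒰, IsOpen U) (hcover : ⋃₀ 𝒰 = Set.univ)
    (hacc : ∀ U ∈ 𝒰, ¬ ∃ x : X, ∀ V ∈ nhds x, {g : Γ | ((g • U) ∩ V).Nonempty}.Infinite) :
    ∀ K : Set X, IsCompact K → {g : Γ | ((g • K) ∩ K).Nonempty}.Finite :=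
  stmt_1_general 𝒰 hopen hcover hacc
end

section
/- Every nonempty totally disconnected, perfect, compact, metrizable topological space is homeomorphic to the Cantor set. -/
/-!
Choose clopen sets `E 0, E 1, …` one at a time so that `E n` cuts every nonempty cell of the
partition generated by `E 0, …, E (n-1)` into two nonempty pieces (possible because the space
is perfect and zero-dimensional), and, inside each cell, agrees with the `n`-th member of a
countable family of clopen sets separating points (which exists by second countability).
The first condition makes `x ↦ (n ↦ [x ∈ E n])` have dense, hence (by compactness) full, range
in `ℕ → Bool`; the second makes it injective. It is continuous because the `E n` are clopen,
so it is a homeomorphism.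
-/

open Set Function TopologicalSpace PiNat

theorem exists_seq_eq_next {α : Type*} (next : (n : ℕ) → (Fin n → α) → α) :
    ∃ E : ℕ → α, ∀ n, E n = next n fun i => E i :=
  ⟨Nat.strongRec fun n prev => next n fun i => prev i i.isLt, Nat.strongRec_eq _⟩

section

variable {X : Type*} [TopologicalSpace X] {ι : Type*}

noncomputable def clopenCode (E : ι → Clopens X) (x : X) : ι → Bool :=
  fun i => (E i : Set X).boolIndicator x

@[simp] lemma clopenCode_eq_true {E : ι → Clopens X} {x : X} {i : ι} :
    clopenCode E x i = true ↔ x ∈ E i :=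
  (Set.mem_iff_boolIndicator _ _).symm

lemma continuous_clopenCode (E : ι → Clopens X) : Continuous (clopenCode E) :=
  continuous_pi fun i => (continuous_boolIndicator_iff_isClopen _).2 (E i).isClopen

lemma isLocallyConstant_clopenCode [Finite ι] (E : ι → Clopens X) :
    IsLocallyConstant (clopenCode E) :=
  (IsLocallyConstant.iff_continuous _).2 (continuous_clopenCode E)

lemma clopenCode_injective {E : ℕ → Clopens X} {C : ℕ → Set X}
    (hC : ∀ x y, x ≠ y → ∃ n, x ∈ C n ∧ y ∉ C n)
    (hE : ∀ n x y, clopenCode (fun i : Fin n => E i) x = clopenCode (fun i : Fin n => E i) y →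
      x ∈ C n → y ∉ C n → x ∈ E n ∧ y ∉ E n) :
    Injective (clopenCode E) := by
  intro x y hxy
  by_contra hne
  obtain ⟨n, hx, hy⟩ := hC x y hne
  obtain ⟨hxE, hyE⟩ := hE n x y (congrArg (· ∘ Fin.val) hxy) hx hy
  exact hyE (by rwa [← clopenCode_eq_true, ← hxy, clopenCode_eq_true])

lemma clopenCode_surjective [CompactSpace X] [Nonempty X] {E : ℕ → Clopens X}
    (hE : ∀ n x (a : Bool), ∃ y, clopenCode (fun i : Fin n => E i) y =
      clopenCode (fun i : Fin n => E i) x ∧ (E n : Set X).boolIndicator y = a) :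
    Surjective (clopenCode E) := by
  have hcylinder (b : ℕ → Bool) (n : ℕ) : ∃ x, clopenCode E x ∈ cylinder b n := by
    induction n with
    | zero => exact ⟨Classical.arbitrary X, by simp [cylinder_zero]⟩
    | succ n ih =>
      obtain ⟨x, hx⟩ := ih
      obtain ⟨y, hyx, hyn⟩ := hE n x (b n)
      refine ⟨y, mem_cylinder_iff.2 fun i hi => ?_⟩
      rcases Nat.lt_succ_iff_lt_or_eq.1 hi with hi | rfl
      · exact (congrFun hyx ⟨i, hi⟩).trans (mem_cylinder_iff.1 hx i hi)
      · exact hyn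
  have hdense : DenseRange (clopenCode E) := by
    refine (isTopologicalBasis_cylinders _).dense_iff.2 ?_
    rintro _ ⟨b, n, rfl⟩ -
    obtain ⟨x, hx⟩ := hcylinder b n
    exact ⟨_, hx, mem_range_self x⟩
  have hclosed : IsClosed (range (clopenCode E)) :=
    (isCompact_range (continuous_clopenCode E)).isClosed
  exact range_eq_univ.1 (hclosed.closure_eq ▸ hdense.closure_range)

section Perfect

variable [PerfectSpace X] [TotallySeparatedSpace X]

lemma exists_isClopen_subset_separating {A C : Set X} (hA : IsClopen A) (hne : A.Nonempty)
    (hC : IsClopen C) :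
    ∃ S ⊆ A, IsClopen S ∧ S.Nonempty ∧ (A \ S).Nonempty ∧
      ∀ x ∈ A, ∀ y ∈ A, x ∈ C → y ∉ C → x ∈ S ∧ y ∉ S := by
  by_cases hsplit : (A ∩ C).Nonempty ∧ (A \ C).Nonempty
  · refine ⟨A ∩ C, inter_subset_left, hA.inter hC, hsplit.1, ?_,
      fun x hx y _ hxC hyC => ⟨⟨hx, hxC⟩, fun h => hyC h.2⟩⟩
    simpa only [sdiff_self_inter] using hsplit.2
  · obtain ⟨x, hx⟩ := hne
    obtain ⟨y, ⟨hy, -⟩, hyx⟩ :=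
      preperfect_iff_nhds.1 hA.isOpen.preperfect x hx A (hA.isOpen.mem_nhds hx)
    obtain ⟨W, hW, hyW, hxW⟩ := exists_isClopen_of_totally_separated hyx
    exact ⟨A ∩ W, inter_subset_left, hA.inter hW, ⟨y, hy, hyW⟩, ⟨x, hx, fun h => hxW h.2⟩,
      fun x' hx' y' hy' hx'C hy'C => (hsplit ⟨⟨x', hx', hx'C⟩, ⟨y', hy', hy'C⟩⟩).elim⟩

lemma exists_clopens_splitting_fibers {β : Type*} [Finite β] {π : X → β}
    (hπ : IsLocallyConstant π) (C : Clopens X) :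
    ∃ G : Clopens X, (∀ x (a : Bool), ∃ y, π y = π x ∧ (G : Set X).boolIndicator y = a) ∧
      ∀ x y, π x = π y → x ∈ C → y ∉ C → x ∈ G ∧ y ∉ G := by
  have hfiber (b : range π) : ∃ S ⊆ π ⁻¹' {b.1}, IsClopen S ∧ S.Nonempty ∧
      (π ⁻¹' {b.1} \ S).Nonempty ∧
      ∀ x ∈ π ⁻¹' {b.1}, ∀ y ∈ π ⁻¹' {b.1}, x ∈ C → y ∉ C → x ∈ S ∧ y ∉ S := by
    obtain ⟨x, hx⟩ := b.2
    exact exists_isClopen_subset_separating (hπ.isClopen_fiber b.1) ⟨x, hx⟩ C.isClopen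
  choose S hSsub hSclopen hSne hSdiff hSsep using hfiber
  have hmem (b : range π) (y : X) (hy : π y = b.1) : y ∈ ⋃ b, S b ↔ y ∈ S b := by
    refine ⟨fun h => ?_, fun h => mem_iUnion_of_mem b h⟩
    obtain ⟨b', hb'⟩ := mem_iUnion.1 h
    obtain rfl : b' = b := Subtype.ext ((hSsub b' hb').symm.trans hy)
    exact hb'
  refine ⟨⟨⋃ b, S b, isClopen_iUnion_of_finite hSclopen⟩, fun x a => ?_, fun x y hxy hx hy => ?_⟩
  · let b : range π := ⟨π x, mem_range_self x⟩
    cases a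
    · obtain ⟨y, hyb, hyS⟩ := hSdiff b
      exact ⟨y, hyb, (notMem_iff_boolIndicator _ _).1 fun h => hyS ((hmem b y hyb).1 h)⟩
    · obtain ⟨y, hy⟩ := hSne b
      exact ⟨y, hSsub b hy, (mem_iff_boolIndicator _ _).1 ((hmem b y (hSsub b hy)).2 hy)⟩
  · let b : range π := ⟨π x, mem_range_self x⟩
    obtain ⟨hxS, hyS⟩ := hSsep b x rfl y hxy.symm hx hy
    exact ⟨(hmem b x rfl).2 hxS, fun h => hyS ((hmem b y hxy.symm).1 h)⟩

end Perfect

theorem exists_bijective_clopenCode [CompactSpace X] [T2Space X] [TotallyDisconnectedSpace X]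
    [SecondCountableTopology X] [PerfectSpace X] [Nonempty X] :
    ∃ E : ℕ → Clopens X, Bijective (clopenCode E) := by
  have : Countable (Clopens X) := Clopens.countable_iff_secondCountable.2 ‹_›
  obtain ⟨C, hC⟩ := exists_surjective_nat (Clopens X)
  choose G hGsplit hGsep using fun n (F : Fin n → Clopens X) =>
    exists_clopens_splitting_fibers (isLocallyConstant_clopenCode F) (C n)
  obtain ⟨E, hE⟩ := exists_seq_eq_next G
  have hCsep (x y : X) (hxy : x ≠ y) : ∃ n, x ∈ C n ∧ y ∉ C n := by
    obtain ⟨U, hU, hxU, hyU⟩ := exists_isClopen_of_totally_separated hxy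
    obtain ⟨n, hn⟩ := hC ⟨U, hU⟩
    exact ⟨n, hn ▸ hxU, hn ▸ hyU⟩
  refine ⟨E, clopenCode_injective (C := fun n => C n) hCsep fun n => ?_,
    clopenCode_surjective fun n => ?_⟩
  · rw [hE n]
    exact hGsep n _
  · rw [hE n]
    exact hGsplit n _

end

/-- Every nonempty totally disconnected, perfect, compact, metrizable space is
homeomorphic to the Cantor set (realized as `ℕ → Bool`). -/
theorem stmt_2 {X : Type*} [TopologicalSpace X] [TopologicalSpace.MetrizableSpace X]
    [CompactSpace X] [TotallyDisconnectedSpace X] [Nonempty X]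
    (hperf : Perfect (Set.univ : Set X)) :
    Nonempty (X ≃ₜ (ℕ → Bool)) := by
  have : PerfectSpace X := ⟨hperf.acc⟩
  obtain ⟨E, hE⟩ := exists_bijective_clopenCode (X := X)
  exact ⟨(continuous_clopenCode E).homeoOfEquivCompactToT2 (f := Equiv.ofBijective _ hE)⟩
end

section
/- Let G be a connected graph on which a group Γ acts freely by graph automorphisms. Then there exists a connected subgraph D of G meeting each Γ-orbit of vertices in exactly one vertex, such that the quotient multigraph G/D obtained by contracting each Γ-translate of D to a single vertex is a Cayley graph of Γ (Babai's contraction lemma). -/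
open Pointwise

private lemma frontier_edge' {V : Type*} {G : SimpleGraph V} {R : Set V} :
    ∀ {x y : V}, G.Walk x y → x ∉ R → y ∈ R →
      ∃ a b, G.Adj a b ∧ a ∉ R ∧ b ∈ R := by
  intro x y p
  induction p with
  | nil => intro hx hy; exact absurd hy hx
  | @cons u v w h p ih =>
    intro hx hy
    by_cases hv : v ∈ R
    · exact ⟨u, v, h, hx, hv⟩
    · exact ih hv hy

/-- Babai's contraction lemma: if a group `Γ` acts freely by automorphisms on a
connected graph `G`, then there is a connected subgraph `D` meeting each orbit in
exactly one vertex, such that the quotient graph obtained by contracting the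
translates of `D` (whose vertices can be identified with `Γ` via `g ↦ g • D`)
is a Cayley graph of `Γ`: its adjacency is given by right multiplication by
elements of a connection set `S`. -/
theorem stmt_3 {Γ V : Type*} [Group Γ] (G : SimpleGraph V) (hconn : G.Connected)
    [MulAction Γ V] (haut : ∀ (g : Γ) (u v : V), G.Adj (g • u) (g • v) ↔ G.Adj u v)
    (hfree : ∀ (g : Γ) (v : V), g • v = v → g = 1) :
    ∃ D : Set V, (SimpleGraph.induce D G).Connected ∧
      (∀ v : V, ∃! u, u ∈ D ∧ u ∈ MulAction.orbit Γ v) ∧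
      ∃ S : Set Γ, ∀ g h : Γ, g ≠ h →
        ((∃ u ∈ (g • D : Set V), ∃ v ∈ (h • D : Set V), G.Adj u v) ↔ ∃ s ∈ S, h = g * s) := by
  obtain ⟨v0⟩ := hconn.nonempty
  set P : Set (Set V) := {D | v0 ∈ D ∧
      (∀ u ∈ D, ∀ v ∈ D, u ∈ MulAction.orbit Γ v → u = v) ∧
      (G.induce D).Preconnected} with hP
  have h0 : ({v0} : Set V) ∈ P := by
    refine ⟨rfl, ?_, ?_⟩
    · rintro u rfl v rfl _; rfl
    · intro a b
      have : a = b := Subtype.ext (a.2.trans b.2.symm)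
      rw [this]
  have hub : ∀ c ⊆ P, IsChain (· ⊆ ·) c → c.Nonempty → ∃ ub ∈ P, ∀ s ∈ c, s ⊆ ub := by
    intro c hcP hchain hcne
    refine ⟨⋃₀ c, ⟨?_, ?_, ?_⟩, fun s hs => Set.subset_sUnion_of_mem hs⟩
    · obtain ⟨s, hs⟩ := hcne
      exact ⟨s, hs, (hcP hs).1⟩
    · rintro u ⟨s, hs, hus⟩ v ⟨t, ht, hvt⟩ horb
      rcases hchain.total hs ht with hst | hts
      · exact (hcP ht).2.1 u (hst hus) v hvt horb
      · exact (hcP hs).2.1 u hus v (hts hvt) horb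
    · rintro ⟨a, s, hs, has⟩ ⟨b, t, ht, hbt⟩
      rcases hchain.total hs ht with hst | hts
      · have hr := (hcP ht).2.2 ⟨a, hst has⟩ ⟨b, hbt⟩
        exact hr.map (G.induceHomOfLE (Set.subset_sUnion_of_mem ht)).toHom
      · have hr := (hcP hs).2.2 ⟨a, has⟩ ⟨b, hts hbt⟩
        exact hr.map (G.induceHomOfLE (Set.subset_sUnion_of_mem hs)).toHom
  obtain ⟨D, -, hDP, hDmax⟩ := zorn_subset_nonempty P hub {v0} h0
  obtain ⟨hv0D, htrans, hpre⟩ := hDP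
  -- the set of represented vertices
  set R : Set V := {v | ∃ u ∈ D, v ∈ MulAction.orbit Γ u} with hR
  have hDR : D ⊆ R := fun d hd => ⟨d, hd, MulAction.mem_orbit_self d⟩
  have hRuniv : ∀ v : V, v ∈ R := by
    by_contra hx
    push_neg at hx
    obtain ⟨x, hxR⟩ := hx
    obtain ⟨p⟩ := hconn.preconnected x v0
    obtain ⟨a, b, hab, haR, hbR⟩ := frontier_edge' p hxR (hDR hv0D)
    obtain ⟨u, huD, g, hgu⟩ := hbR
    -- a' := g⁻¹ • a is adjacent to u ∈ D and not represented
    set a' : V := g⁻¹ • a with ha'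
    have hadj : G.Adj a' u := by
      refine (haut g a' u).mp ?_
      rw [ha', smul_inv_smul]
      show G.Adj a (g • u)
      rw [show g • u = b from hgu]
      exact hab
    have ha'R : a' ∉ R := by
      rintro ⟨u', hu'D, k, hk⟩
      exact haR ⟨u', hu'D, g * k, by
        show (g * k) • u' = a
        rw [mul_smul, show k • u' = a' from hk, ha', smul_inv_smul]⟩
    have ha'D : a' ∉ D := fun h => ha'R (hDR h)
    have hins : insert a' D ∈ P := by
      refine ⟨Set.mem_insert_of_mem _ hv0D, ?_, ?_⟩
      · rintro p (rfl | hpD) q (rfl | hqD) horb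
        · rfl
        · exact absurd ⟨q, hqD, horb⟩ ha'R
        · obtain ⟨k, hk⟩ := horb
          exact absurd ⟨p, hpD, k⁻¹, by
            show k⁻¹ • p = a'
            rw [← show k • a' = p from hk, inv_smul_smul]⟩ ha'R
        · exact htrans p hpD q hqD horb
      · have hu' : u ∈ insert a' D := Set.mem_insert_of_mem _ huD
        have key : ∀ c : ↥(insert a' D),
            (G.induce (insert a' D)).Reachable c ⟨u, hu'⟩ := by
          rintro ⟨c, hc | hcD⟩
          · refine SimpleGraph.Adj.reachable ?_
            simp only [SimpleGraph.comap_adj, Function.Embedding.coe_subtype]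
            rw [hc]; exact hadj
          · have hr := hpre ⟨c, hcD⟩ ⟨u, huD⟩
            exact hr.map (G.induceHomOfLE (Set.subset_insert a' D)).toHom
        intro p q
        exact (key p).trans (key q).symm
    have : insert a' D ⊆ D := hDmax hins (Set.subset_insert a' D)
    exact ha'D (this (Set.mem_insert a' D))
  -- transversal property
  have horb_symm : ∀ {u v : V}, u ∈ MulAction.orbit Γ v → v ∈ MulAction.orbit Γ u := by
    rintro u v ⟨k, rfl⟩
    exact ⟨k⁻¹, inv_smul_smul k v⟩
  have : Nonempty ↑D := ⟨⟨v0, hv0D⟩⟩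
  refine ⟨D, ⟨hpre⟩, ?_, ?_⟩
  · intro v
    obtain ⟨u, huD, hvorb⟩ := hRuniv v
    refine ⟨u, ⟨huD, horb_symm hvorb⟩, ?_⟩
    rintro u' ⟨hu'D, hu'orb⟩
    exact htrans u' hu'D u huD (by
      obtain ⟨k, hk⟩ := hu'orb
      obtain ⟨l, hl⟩ := hvorb
      exact ⟨k * l, by
        show (k * l) • u = u'
        rw [mul_smul, show l • u = v from hl]
        exact hk⟩)
  · refine ⟨{s : Γ | ∃ u ∈ D, ∃ v ∈ (s • D : Set V), G.Adj u v}, ?_⟩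
    intro g h _
    constructor
    · rintro ⟨u, hu, v, hv, huv⟩
      obtain ⟨du, hdu, rfl⟩ := hu
      obtain ⟨dv, hdv, rfl⟩ := hv
      refine ⟨g⁻¹ * h, ⟨du, hdu, (g⁻¹ * h) • dv, ⟨dv, hdv, rfl⟩, ?_⟩, by group⟩
      refine (haut g du ((g⁻¹ * h) • dv)).mp ?_
      rw [← mul_smul, mul_inv_cancel_left]
      exact huv
    · rintro ⟨s, ⟨u, huD, v, ⟨dv, hdv, rfl⟩, huv⟩, rfl⟩
      refine ⟨g • u, ⟨u, huD, rfl⟩, (g * s) • dv, ⟨dv, hdv, rfl⟩, ?_⟩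
      rw [mul_smul]
      exact (haut g u (s • dv)).mpr huv
end

section
/- Let X be an arc-connected metrizable topological space, and let K_Y, K_Z ⊂ X be two disjoint, closed, connected separators with sides (Y, Yᶜ) and (Z, Zᶜ) respectively. Then at least one of the four sets Y ∩ Z, Y ∩ Zᶜ, Yᶜ ∩ Z, Yᶜ ∩ Zᶜ is empty. -/
/-! Each connected separator avoids the other one, so it lies on one side of it: say `K_Y ⊆ Z`
and `K_Z ⊆ Y`. Then the complement of `Y' ∩ Z'` is the open set `Y ∪ Z`, so `Y' ∩ Z'` is clopen;
it misses `K_Y`, hence it is empty because `X` is connected. -/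

section

open Set

variable {X : Type*} [TopologicalSpace X]

/-- `U`, `V` are the two sides of the separator `K`, except that they may be empty. -/
structure IsOpenSplitting (K U V : Set X) : Prop where
  isOpen_left : IsOpen U
  isOpen_right : IsOpen V
  disjoint : Disjoint U V
  union_eq : U ∪ V = Kᶜ

namespace IsOpenSplitting

variable {K L U U' V V' s : Set X}

theorem symm (h : IsOpenSplitting K U V) : IsOpenSplitting K V U :=
  ⟨h.isOpen_right, h.isOpen_left, h.disjoint.symm, union_comm V U ▸ h.union_eq⟩

theorem mem_right_iff (h : IsOpenSplitting K U V) {x : X} : x ∈ V ↔ x ∉ U ∧ x ∉ K := by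
  have hx : x ∈ U ∪ V ↔ x ∈ Kᶜ := by rw [h.union_eq]
  simp only [mem_union, mem_compl_iff] at hx
  have hUV : x ∈ U → x ∉ V := fun hU hV => h.disjoint.ne_of_mem hU hV rfl
  tauto

theorem subset_or_subset (h : IsOpenSplitting K U V) (hs : IsPreconnected s)
    (hsK : Disjoint s K) : s ⊆ U ∨ s ⊆ V :=
  hs.subset_or_subset h.isOpen_left h.isOpen_right h.disjoint
    (h.union_eq ▸ hsK.subset_compl_right)

theorem inter_eq_empty [PreconnectedSpace X] (hK : IsOpenSplitting K U U')
    (hL : IsOpenSplitting L V V') (hKne : K.Nonempty) (hKV : K ⊆ V) (hLU : L ⊆ U) :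
    U' ∩ V' = ∅ := by
  have hcompl : U' ∩ V' = (U ∪ V)ᶜ := by
    ext x
    have hxK : x ∈ K → x ∈ V := fun hx => hKV hx
    have hxL : x ∈ L → x ∈ U := fun hx => hLU hx
    simp only [mem_inter_iff, hK.mem_right_iff, hL.mem_right_iff, mem_compl_iff, mem_union]
    tauto
  have hclopen : IsClopen (U' ∩ V') :=
    ⟨hcompl ▸ (hK.isOpen_left.union hL.isOpen_left).isClosed_compl,
      hK.isOpen_right.inter hL.isOpen_right⟩
  refine (isClopen_iff.1 hclopen).resolve_right fun huniv => ?_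
  obtain ⟨k, hk⟩ := hKne
  have hkU' : k ∈ U' := (huniv.symm ▸ mem_univ k : k ∈ U' ∩ V').1
  exact (hK.mem_right_iff.1 hkU').2 hk

end IsOpenSplitting

end

theorem stmt_7_general {X : Type*} [TopologicalSpace X]
    [PathConnectedSpace X]
    (KY KZ Y Y' Z Z' : Set X)
    (hKYconn : IsConnected KY)
    (hKZconn : IsConnected KZ)
    (hKdisj : Disjoint KY KZ)
    (hYo : IsOpen Y) (hY'o : IsOpen Y')
    (hYd : Disjoint Y Y') (hYu : Y ∪ Y' = KYᶜ)
    (hZo : IsOpen Z) (hZ'o : IsOpen Z')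
    (hZd : Disjoint Z Z') (hZu : Z ∪ Z' = KZᶜ) :
    Y ∩ Z = ∅ ∨ Y ∩ Z' = ∅ ∨ Y' ∩ Z = ∅ ∨ Y' ∩ Z' = ∅ := by
  have hY : IsOpenSplitting KY Y Y' := ⟨hYo, hY'o, hYd, hYu⟩
  have hZ : IsOpenSplitting KZ Z Z' := ⟨hZo, hZ'o, hZd, hZu⟩
  have hKYne := hKYconn.nonempty
  rcases hZ.subset_or_subset hKYconn.isPreconnected hKdisj with hKYZ | hKYZ <;>
  rcases hY.subset_or_subset hKZconn.isPreconnected hKdisj.symm with hKZY | hKZY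
  · exact Or.inr <| Or.inr <| Or.inr <| hY.inter_eq_empty hZ hKYne hKYZ hKZY
  · exact Or.inr <| Or.inl <| hY.symm.inter_eq_empty hZ hKYne hKYZ hKZY
  · exact Or.inr <| Or.inr <| Or.inl <| hY.inter_eq_empty hZ.symm hKYne hKYZ hKZY
  · exact Or.inl <| hY.symm.inter_eq_empty hZ.symm hKYne hKYZ hKZY

/-- If `K_Y` and `K_Z` are disjoint closed connected separators of an arc-connected
metrizable space `X`, with sides `(Y, Y')` and `(Z, Z')` respectively, then at least
one of the four sets `Y ∩ Z`, `Y ∩ Z'`, `Y' ∩ Z`, `Y' ∩ Z'` is empty. (Since the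
separators are closed, their sides are open in `X`.) -/
theorem stmt_7 {X : Type*} [TopologicalSpace X] [TopologicalSpace.MetrizableSpace X]
    [PathConnectedSpace X]
    (KY KZ Y Y' Z Z' : Set X)
    (hKYcl : IsClosed KY) (hKYconn : IsConnected KY)
    (hKZcl : IsClosed KZ) (hKZconn : IsConnected KZ)
    (hKdisj : Disjoint KY KZ)
    (hYo : IsOpen Y) (hY'o : IsOpen Y') (hYne : Y.Nonempty) (hY'ne : Y'.Nonempty)
    (hYd : Disjoint Y Y') (hYu : Y ∪ Y' = KYᶜ)
    (hZo : IsOpen Z) (hZ'o : IsOpen Z') (hZne : Z.Nonempty) (hZ'ne : Z'.Nonempty)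
    (hZd : Disjoint Z Z') (hZu : Z ∪ Z' = KZᶜ) :
    Y ∩ Z = ∅ ∨ Y ∩ Z' = ∅ ∨ Y' ∩ Z = ∅ ∨ Y' ∩ Z' = ∅ :=
  stmt_7_general KY KZ Y Y' Z Z' hKYconn hKZconn hKdisj hYo hY'o hYd hYu hZo hZ'o hZd hZu
end

section
/- Let G be a finitely generated Cayley graph of an infinite group. If G is 1-ended, then G is 3-connected. -/
/-!
Write `∂U` for the set of vertices outside `U` adjacent to `U`; it suffices to show `|∂U| ≥ 3` for
every finite nonempty `U`, since a component of `G - A` that is finite has its boundary inside `A`,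
and one-endedness allows at most one infinite component.

Let `κ` be the least size of `∂U` over finite nonempty `U`. By submodularity of `U ↦ |∂U|`, two
atoms (sets realising `κ` of least cardinality) that meet coincide, and by transitivity every
vertex lies in an atom. Gluing to an atom `B` the atom through a vertex of `∂B` gives a finite set
with boundary of size at most `2κ - 2`, so `κ ≥ 2`. If `κ = 2`, fix `q ∈ ∂B` and keep gluing on the
atom through the boundary vertex other than `q`: the union `W` of all these stages is infinite with
`∂W = {q}`. Beyond `q` there is then either an infinite set, which gives a second end, or nothing,
and then a large finite stage together with `q` would have a boundary of size one.
-/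

namespace SimpleGraph

variable {V : Type*}

def outerBoundary (G : SimpleGraph V) (U : Set V) : Set V :=
  {v | v ∉ U ∧ ∃ u ∈ U, G.Adj u v}

def IsVertexTransitive (G : SimpleGraph V) : Prop :=
  ∀ x y : V, ∃ φ : G ≃g G, φ x = y

/-- Fragments and atoms in the sense of Mader and Watkins, for the outer vertex boundary. -/
structure IsFragment (G : SimpleGraph V) (U : Set V) : Prop where
  finite : U.Finite
  nonempty : U.Nonempty
  ncard_outerBoundary_le : ∀ W : Set V, W.Finite → W.Nonempty →
    (G.outerBoundary U).ncard ≤ (G.outerBoundary W).ncard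

structure IsAtom (G : SimpleGraph V) (U : Set V) : Prop where
  isFragment : G.IsFragment U
  ncard_le : ∀ W, G.IsFragment W → U.ncard ≤ W.ncard

def IsAtomSaturated (G : SimpleGraph V) (H : Set V) : Prop :=
  ∀ A, G.IsAtom A → (A ∩ H).Nonempty → A ⊆ H

variable {G : SimpleGraph V} {A U W X Y H P K : Set V}

lemma outerBoundary_finite [G.LocallyFinite] (hU : U.Finite) : (G.outerBoundary U).Finite :=
  (hU.biUnion fun u _ => (G.neighborSet u).toFinite).subset
    fun _ ⟨_, _, hu, hadj⟩ => Set.mem_biUnion hu hadj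

lemma Walk.exists_mem_support_mem_outerBoundary :
    ∀ {a b : V} (w : G.Walk a b), a ∈ U → b ∉ U → ∃ v ∈ w.support, v ∈ G.outerBoundary U
  | _, _, .nil, ha, hb => absurd ha hb
  | _, _, .cons (v := c) hadj w, ha, hb => by
    by_cases hc : c ∈ U
    · obtain ⟨v, hv, hvU⟩ := w.exists_mem_support_mem_outerBoundary hc hb
      exact ⟨v, by simp [hv], hvU⟩
    · exact ⟨c, by simp, hc, _, ha, hadj⟩

lemma outerBoundary_nonempty (hG : G.Preconnected) (hU : U.Nonempty) (hU' : Uᶜ.Nonempty) :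
    (G.outerBoundary U).Nonempty := by
  obtain ⟨a, ha⟩ := hU
  obtain ⟨b, hb⟩ := hU'
  obtain ⟨v, -, hv⟩ := (hG a b).some.exists_mem_support_mem_outerBoundary ha hb
  exact ⟨v, hv⟩

lemma outerBoundary_image {V' : Type*} {G' : SimpleGraph V'} (φ : G ≃g G') (U : Set V) :
    G'.outerBoundary (φ '' U) = φ '' G.outerBoundary U := by
  ext v
  obtain ⟨v, rfl⟩ := φ.surjective v
  simp only [outerBoundary, Set.mem_ofPred_eq, φ.injective.mem_set_image, Set.exists_mem_image,
    φ.map_adj_iff]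

lemma ncard_outerBoundary_inter_add_union_le [G.LocallyFinite] (hX : X.Finite) (hY : Y.Finite) :
    (G.outerBoundary (X ∩ Y)).ncard + (G.outerBoundary (X ∪ Y)).ncard ≤
      (G.outerBoundary X).ncard + (G.outerBoundary Y).ncard := by
  set N : Set V → Set V := fun U => U ∪ G.outerBoundary U
  have hNfin : ∀ {U}, U.Finite → (N U).Finite := fun hU => hU.union (outerBoundary_finite hU)
  have hN : ∀ {U}, U.Finite → (N U).ncard = U.ncard + (G.outerBoundary U).ncard := fun hU =>
    Set.ncard_union_eq (Set.disjoint_left.2 fun _ hv h => h.1 hv) hU (outerBoundary_finite hU)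
  have hinter : G.outerBoundary (X ∩ Y) ⊆ (N X ∩ N Y) \ (X ∩ Y) := by
    rintro v ⟨hv, u, ⟨huX, huY⟩, hadj⟩
    refine ⟨⟨?_, ?_⟩, hv⟩
    · by_cases h : v ∈ X
      exacts [Or.inl h, Or.inr ⟨h, u, huX, hadj⟩]
    · by_cases h : v ∈ Y
      exacts [Or.inl h, Or.inr ⟨h, u, huY, hadj⟩]
  have hunion : G.outerBoundary (X ∪ Y) ⊆ (N X ∪ N Y) \ (X ∪ Y) := by
    rintro v ⟨hv, u, hu | hu, hadj⟩
    · exact ⟨Or.inl (Or.inr ⟨fun h => hv (Or.inl h), u, hu, hadj⟩), hv⟩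
    · exact ⟨Or.inr (Or.inr ⟨fun h => hv (Or.inr h), u, hu, hadj⟩), hv⟩
  have hsub_inter : X ∩ Y ⊆ N X ∩ N Y :=
    Set.inter_subset_inter Set.subset_union_left Set.subset_union_left
  have hsub_union : X ∪ Y ⊆ N X ∪ N Y :=
    Set.union_subset_union Set.subset_union_left Set.subset_union_left
  have h₁ := Set.ncard_le_ncard hinter ((hNfin hX).inter_of_left _).sdiff
  have h₂ := Set.ncard_le_ncard hunion ((hNfin hX).union (hNfin hY)).sdiff
  have h₃ := Set.ncard_sdiff_add_ncard_of_subset hsub_inter ((hNfin hX).inter_of_left _)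
  have h₄ := Set.ncard_sdiff_add_ncard_of_subset hsub_union ((hNfin hX).union (hNfin hY))
  have h₅ := Set.ncard_inter_add_ncard_union (N X) (N Y) (hNfin hX) (hNfin hY)
  have h₆ := Set.ncard_inter_add_ncard_union X Y hX hY
  have h₇ := hN hX
  have h₈ := hN hY
  omega

lemma ncard_outerBoundary_union_add_one_le [G.LocallyFinite] (hH : H.Finite) (hP : P.Finite)
    (hHP : Disjoint H P) {v : V} (hvH : v ∈ G.outerBoundary H) (hvP : v ∈ P) :
    (G.outerBoundary (H ∪ P)).ncard + 1 ≤
      (G.outerBoundary H \ P).ncard + (G.outerBoundary P).ncard := by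
  obtain ⟨-, h, hh, hadj⟩ := hvH
  have hhP : h ∈ G.outerBoundary P := ⟨hHP.notMem_of_mem_left hh, v, hvP, hadj.symm⟩
  have hsub : G.outerBoundary (H ∪ P) ⊆
      (G.outerBoundary H \ P) ∪ (G.outerBoundary P \ {h}) := by
    rintro w ⟨hw, u, hu | hu, hadj⟩
    · exact Or.inl ⟨⟨fun h => hw (Or.inl h), u, hu, hadj⟩, fun h => hw (Or.inr h)⟩
    · exact Or.inr ⟨⟨fun h => hw (Or.inr h), u, hu, hadj⟩, fun hwh => hw (Or.inl (hwh ▸ hh))⟩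
  have hfin := ((outerBoundary_finite (G := G) hH).sdiff (t := P)).union
    ((outerBoundary_finite (G := G) hP).sdiff (t := {h}))
  have := Set.ncard_sdiff_singleton_add_one hhP (outerBoundary_finite hP)
  have := (Set.ncard_le_ncard hsub hfin).trans (Set.ncard_union_le _ _)
  omega

lemma IsFragment.ncard_outerBoundary_eq (hU : G.IsFragment U) (hW : G.IsFragment W) :
    (G.outerBoundary U).ncard = (G.outerBoundary W).ncard :=
  (hU.ncard_outerBoundary_le _ hW.finite hW.nonempty).antisymm
    (hW.ncard_outerBoundary_le _ hU.finite hU.nonempty)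

lemma exists_isAtom (hU : U.Finite) (hU' : U.Nonempty) : ∃ A, G.IsAtom A := by
  obtain ⟨F, ⟨hF, hF'⟩, hFmin⟩ := (measure fun W => (G.outerBoundary W).ncard).wf.has_min
    {W | W.Finite ∧ W.Nonempty} ⟨U, hU, hU'⟩
  obtain ⟨A, hA, hAmin⟩ := (measure Set.ncard).wf.has_min {W | G.IsFragment W}
    ⟨F, hF, hF', fun W hW hW' => not_lt.1 (hFmin W ⟨hW, hW'⟩)⟩
  exact ⟨A, hA, fun W hW => not_lt.1 (hAmin W hW)⟩

lemma IsFragment.image {V' : Type*} {G' : SimpleGraph V'} (φ : G ≃g G') (hU : G.IsFragment U) :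
    G'.IsFragment (φ '' U) := by
  refine ⟨hU.finite.image φ, hU.nonempty.image φ, fun W hW hW' => ?_⟩
  rw [← Set.image_preimage_eq W φ.surjective, outerBoundary_image, outerBoundary_image,
    Set.ncard_image_of_injective _ φ.injective, Set.ncard_image_of_injective _ φ.injective]
  exact hU.ncard_outerBoundary_le _ (hW.preimage φ.injective.injOn) (hW'.preimage φ.surjective)

lemma IsAtom.image {V' : Type*} {G' : SimpleGraph V'} (φ : G ≃g G') (hU : G.IsAtom U) :
    G'.IsAtom (φ '' U) := by
  refine ⟨hU.isFragment.image φ, fun W hW => ?_⟩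
  rw [Set.ncard_image_of_injective _ φ.injective]
  exact (hU.ncard_le _ (hW.image φ.symm)).trans_eq
    (Set.ncard_image_of_injective _ φ.symm.injective)

lemma IsFragment.inter [G.LocallyFinite] (hX : G.IsFragment X) (hY : G.IsFragment Y)
    (hXY : (X ∩ Y).Nonempty) : G.IsFragment (X ∩ Y) := by
  refine ⟨hX.finite.inter_of_left _, hXY, fun W hW hW' => ?_⟩
  have := ncard_outerBoundary_inter_add_union_le (G := G) hX.finite hY.finite
  have := hX.ncard_outerBoundary_le _ (hX.finite.union hY.finite)
    (hX.nonempty.mono Set.subset_union_left)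
  have := hY.ncard_outerBoundary_le W hW hW'
  omega

lemma IsAtom.eq_of_inter_nonempty [G.LocallyFinite] (hX : G.IsAtom X) (hY : G.IsAtom Y)
    (hXY : (X ∩ Y).Nonempty) : X = Y := by
  have hXY' := hX.isFragment.inter hY.isFragment hXY
  have hX' := Set.eq_of_subset_of_ncard_le Set.inter_subset_left (hX.ncard_le _ hXY')
    hX.isFragment.finite
  have hY' := Set.eq_of_subset_of_ncard_le Set.inter_subset_right (hY.ncard_le _ hXY')
    hY.isFragment.finite
  rw [← hX', hY']

lemma IsAtom.isAtomSaturated [G.LocallyFinite] (hX : G.IsAtom X) : G.IsAtomSaturated X :=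
  fun _ hA hAX => (hA.eq_of_inter_nonempty hX hAX).le

lemma IsAtomSaturated.disjoint (hH : G.IsAtomSaturated H) (hP : G.IsAtom P) {v : V}
    (hvP : v ∈ P) (hvH : v ∉ H) : Disjoint H P :=
  Set.disjoint_right.2 fun _ hu huH => hvH (hH P hP ⟨_, hu, huH⟩ hvP)

lemma IsAtomSaturated.union (h₁ : G.IsAtomSaturated X) (h₂ : G.IsAtomSaturated Y) :
    G.IsAtomSaturated (X ∪ Y) := by
  rintro A hA ⟨v, hvA, hv | hv⟩
  exacts [(h₁ A hA ⟨v, hvA, hv⟩).trans Set.subset_union_left,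
    (h₂ A hA ⟨v, hvA, hv⟩).trans Set.subset_union_right]

lemma IsVertexTransitive.exists_isAtom_mem (hG : G.IsVertexTransitive) (hA : G.IsAtom U) (v : V) :
    ∃ P, G.IsAtom P ∧ v ∈ P := by
  obtain ⟨a, ha⟩ := hA.isFragment.nonempty
  obtain ⟨φ, hφ⟩ := hG a v
  exact ⟨φ '' U, hA.image φ, a, ha, hφ⟩

lemma IsVertexTransitive.two_le_ncard_outerBoundary [G.LocallyFinite] [Infinite V]
    (hG : G.IsVertexTransitive) (hconn : G.Connected) (hA : G.IsAtom U) :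
    2 ≤ (G.outerBoundary U).ncard := by
  obtain ⟨hfin, hne, hmin⟩ := hA.isFragment
  obtain ⟨v, hv⟩ := outerBoundary_nonempty hconn.preconnected hne hfin.infinite_compl.nonempty
  obtain ⟨P, hP, hvP⟩ := hG.exists_isAtom_mem hA v
  have := ncard_outerBoundary_union_add_one_le hfin hP.isFragment.finite
    (hA.isAtomSaturated.disjoint hP hvP hv.1) hv hvP
  have := Set.ncard_lt_ncard (Set.sdiff_ssubset_left_iff.2 ⟨v, hv, hvP⟩)
    (outerBoundary_finite (G := G) hfin)
  have := hP.isFragment.ncard_outerBoundary_eq hA.isFragment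
  have := hmin _ (hfin.union hP.isFragment.finite) (hne.mono Set.subset_union_left)
  omega

section Ends

open CategoryTheory

lemma mem_of_reachable_induce_compl (hU : G.outerBoundary U ⊆ K) {x y : ↥Kᶜ}
    (h : (G.induce Kᶜ).Reachable x y) (hx : (x : V) ∈ U) : (y : V) ∈ U := by
  obtain ⟨w⟩ := h
  induction w with
  | nil => exact hx
  | @cons a b _ hadj _ ih => exact ih (by_contra fun hb => b.2 (hU ⟨hb, a, hx, hadj⟩))

lemma ComponentCompl.supp_subset_of_outerBoundary_subset (C : G.ComponentCompl K)
    (hU : G.outerBoundary U ⊆ K) (hCU : (C.supp ∩ U).Nonempty) : C.supp ⊆ U := by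
  obtain ⟨c, ⟨hcK, rfl⟩, hcU⟩ := hCU
  rintro d ⟨hdK, hd⟩
  exact mem_of_reachable_induce_compl hU (ConnectedComponent.exact hd.symm) hcU

lemma ComponentCompl.outerBoundary_supp_subset (C : G.ComponentCompl K) :
    G.outerBoundary C.supp ⊆ K := fun v ⟨hvC, u, huC, hadj⟩ =>
  by_contra fun hvK => hvC (C.mem_of_adj u v huC hvK hadj)

lemma exists_componentCompl_supp_infinite_subset [G.LocallyFinite] (hG : G.Preconnected)
    (hK : K.Finite) (hUK : Disjoint U K) (hU : G.outerBoundary U ⊆ K) (hUinf : U.Infinite) :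
    ∃ C : G.ComponentCompl K, C.supp.Infinite ∧ C.supp ⊆ U := by
  have : Fact G.Preconnected := ⟨hG⟩
  lift K to Finset V using hK
  by_contra! hC
  have hcover : U ⊆ ⋃ C : G.ComponentCompl K, C.supp ∩ U := fun u hu =>
    Set.mem_iUnion.2 ⟨_, ⟨hUK.notMem_of_mem_left hu, rfl⟩, hu⟩
  refine hUinf ((Set.finite_iUnion fun C => Set.not_infinite.1 fun hinf => ?_).subset hcover)
  exact hC C (hinf.mono Set.inter_subset_left)
    (C.supp_subset_of_outerBoundary_subset hU hinf.nonempty)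

lemma exists_end_apply_eq [G.LocallyFinite] [Infinite V] (hG : G.Preconnected) {K : Finset V}
    (C : G.ComponentCompl K) (hC : C.supp.Infinite) : ∃ e ∈ G.end, e (Opposite.op K) = C := by
  have : Fact G.Preconnected := ⟨hG⟩
  set F := G.componentComplFunctor
  have : ∀ j, Finite (F.obj j) := fun j => G.componentCompl_finite j.unop
  have : ∀ j, Nonempty (F.obj j) := fun j => G.componentCompl_nonempty_of_infinite j.unop
  have hML : F.IsMittagLeffler :=
    F.isMittagLeffler_of_exists_finite_range fun j => ⟨j, 𝟙 j, Set.toFinite _⟩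
  have : ∀ j, Nonempty (F.toEventualRanges.obj j) := F.toEventualRanges_nonempty hML
  obtain ⟨s, hs⟩ := F.toEventualRanges.eval_section_surjective_of_surjective
    (F.surjective_toEventualRanges hML) (Opposite.op K)
    ⟨C, (G.infinite_iff_in_eventualRange C).mp hC⟩
  exact ⟨_, (F.toEventualRangesSectionsEquiv s).2, congrArg Subtype.val hs⟩

lemma ComponentCompl.eq_of_supp_infinite [G.LocallyFinite] [Infinite V] (hG : G.Preconnected)
    (hend : Subsingleton G.end) (hK : K.Finite) {C D : G.ComponentCompl K}
    (hC : C.supp.Infinite) (hD : D.supp.Infinite) : C = D := by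
  lift K to Finset V using hK
  obtain ⟨e, he, rfl⟩ := exists_end_apply_eq hG C hC
  obtain ⟨f, hf, rfl⟩ := exists_end_apply_eq hG D hD
  exact congrArg (fun e : G.end => e.1 (Opposite.op K)) (Subsingleton.elim ⟨e, he⟩ ⟨f, hf⟩)

lemma not_disjoint_of_outerBoundary_subset [G.LocallyFinite] [Infinite V]
    (hG : G.Preconnected) (hend : Subsingleton G.end) (hK : K.Finite)
    (hXK : Disjoint X K) (hX : G.outerBoundary X ⊆ K) (hXinf : X.Infinite)
    (hYK : Disjoint Y K) (hY : G.outerBoundary Y ⊆ K) (hYinf : Y.Infinite) : ¬ Disjoint X Y := by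
  obtain ⟨C, hCinf, hCX⟩ := exists_componentCompl_supp_infinite_subset hG hK hXK hX hXinf
  obtain ⟨D, hDinf, hDY⟩ := exists_componentCompl_supp_infinite_subset hG hK hYK hY hYinf
  obtain rfl := ComponentCompl.eq_of_supp_infinite hG hend hK hCinf hDinf
  obtain ⟨v, hv⟩ := C.nonempty
  exact Set.not_disjoint_iff.2 ⟨v, hCX hv, hDY hv⟩

end Ends

/-- When the atoms have boundaries of size two they are the vertices of a double ray, and such an
`H` is an interval of it starting at `B` and extending away from `q`. -/
structure IsAtomInterval (G : SimpleGraph V) (B : Set V) (q : V) (H : Set V) : Prop where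
  finite : H.Finite
  subset : B ⊆ H
  saturated : G.IsAtomSaturated H
  mem_outerBoundary : q ∈ G.outerBoundary H
  ncard_outerBoundary_le : (G.outerBoundary H).ncard ≤ 2

section TwoSeparator

variable [G.LocallyFinite] {B H₁ H₂ : Set V} {q : V}

lemma isAtomInterval_self (hB : G.IsAtom B) (hκ : (G.outerBoundary B).ncard = 2)
    (hq : q ∈ G.outerBoundary B) : G.IsAtomInterval B q B :=
  ⟨hB.isFragment.finite, subset_rfl, hB.isAtomSaturated, hq, hκ.le⟩

lemma IsAtomInterval.union (hB : G.IsAtom B) (hκ : (G.outerBoundary B).ncard = 2)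
    (h₁ : G.IsAtomInterval B q H₁) (h₂ : G.IsAtomInterval B q H₂) :
    G.IsAtomInterval B q (H₁ ∪ H₂) := by
  obtain ⟨hfin₁, hB₁, hsat₁, ⟨hqH₁, u, hu, hadj⟩, hκ₁⟩ := h₁
  obtain ⟨hfin₂, hB₂, hsat₂, hq₂, hκ₂⟩ := h₂
  refine ⟨hfin₁.union hfin₂, hB₁.trans Set.subset_union_left, hsat₁.union hsat₂,
    ⟨fun h => h.elim hqH₁ hq₂.1, u, Or.inl hu, hadj⟩, ?_⟩
  have := ncard_outerBoundary_inter_add_union_le (G := G) hfin₁ hfin₂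
  have := hB.isFragment.ncard_outerBoundary_le _ (hfin₁.inter_of_left H₂)
    (hB.isFragment.nonempty.mono (Set.subset_inter hB₁ hB₂))
  omega

lemma IsAtomInterval.union_isAtom (hB : G.IsAtom B) (hκ : (G.outerBoundary B).ncard = 2)
    (hH : G.IsAtomInterval B q H) {v : V} (hv : v ∈ G.outerBoundary H) (hvq : v ≠ q)
    (hP : G.IsAtom P) (hvP : v ∈ P) : G.IsAtomInterval B q (H ∪ P) := by
  obtain ⟨hfin, hBH, hsat, ⟨hqH, u, hu, hadj⟩, hκH⟩ := hH
  have hfinH := outerBoundary_finite (G := G) hfin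
  have hfinP := hP.isFragment.finite
  have hstep := ncard_outerBoundary_union_add_one_le hfin hfinP (hsat.disjoint hP hvP hv.1) hv hvP
  have hκP := hP.isFragment.ncard_outerBoundary_eq hB.isFragment
  have hκHP := hB.isFragment.ncard_outerBoundary_le _ (hfin.union hfinP)
    (hB.isFragment.nonempty.mono (hBH.trans Set.subset_union_left))
  -- otherwise `∂H = {q, v} ⊆ P` and `H ∪ P` would have a boundary of size at most one
  have hqP : q ∉ P := by
    intro hqP
    have hqv : {q, v} ⊆ G.outerBoundary H :=
      Set.insert_subset ⟨hqH, u, hu, hadj⟩ (Set.singleton_subset_iff.2 hv)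
    have := Set.ncard_le_ncard (Set.sdiff_subset_sdiff_right (s := G.outerBoundary H)
      (Set.insert_subset hqP (Set.singleton_subset_iff.2 hvP))) hfinH.sdiff
    have := Set.ncard_sdiff_add_ncard_of_subset hqv hfinH
    rw [Set.ncard_pair hvq.symm] at this
    omega
  have := Set.ncard_le_ncard (Set.sdiff_subset_sdiff_right (s := G.outerBoundary H)
    (Set.singleton_subset_iff.2 hvP)) hfinH.sdiff
  have := Set.ncard_sdiff_singleton_add_one hv hfinH
  exact ⟨hfin.union hfinP, hBH.trans Set.subset_union_left, hsat.union hP.isAtomSaturated,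
    ⟨fun h => h.elim hqH hqP, u, Or.inl hu, hadj⟩, by omega⟩

lemma IsVertexTransitive.outerBoundary_sUnion_isAtomInterval_subset (hG : G.IsVertexTransitive)
    (hB : G.IsAtom B) (hκ : (G.outerBoundary B).ncard = 2) :
    G.outerBoundary (⋃₀ {H | G.IsAtomInterval B q H}) ⊆ {q} := by
  rintro v ⟨hvW, u, ⟨H, hH, huH⟩, hadj⟩
  by_contra hvq
  obtain ⟨P, hP, hvP⟩ := hG.exists_isAtom_mem hB v
  have hvH : v ∉ H := fun h => hvW ⟨H, hH, h⟩
  exact hvW ⟨H ∪ P, hH.union_isAtom hB hκ ⟨hvH, u, huH, hadj⟩ hvq hP hvP, Or.inr hvP⟩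

lemma exists_isAtomInterval_superset (hB : G.IsAtom B) (hκ : (G.outerBoundary B).ncard = 2)
    (hq : q ∈ G.outerBoundary B) {F : Set V} (hF : F.Finite)
    (hFW : F ⊆ ⋃₀ {H | G.IsAtomInterval B q H}) : ∃ H, G.IsAtomInterval B q H ∧ F ⊆ H := by
  induction F, hF using Set.Finite.induction_on with
  | empty => exact ⟨B, isAtomInterval_self hB hκ hq, Set.empty_subset _⟩
  | @insert a F _ _ ih =>
    obtain ⟨H, hH, hFH⟩ := ih ((Set.subset_insert _ _).trans hFW)
    obtain ⟨H', hH', haH'⟩ := hFW (Set.mem_insert _ _)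
    exact ⟨H ∪ H', hH.union hB hκ hH',
      Set.insert_subset (Or.inr haH') (hFH.trans Set.subset_union_left)⟩

lemma IsVertexTransitive.ncard_outerBoundary_ne_two [Infinite V] (hG : G.IsVertexTransitive)
    (hconn : G.Connected) (hend : Subsingleton G.end) (hB : G.IsAtom B) :
    (G.outerBoundary B).ncard ≠ 2 := by
  intro hκ
  obtain ⟨q, hq⟩ := Set.nonempty_of_ncard_ne_zero (s := G.outerBoundary B) (by omega)
  have htwo : ∀ U : Set V, U.Finite → U.Nonempty → 2 ≤ (G.outerBoundary U).ncard :=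
    fun U hU hU' => hκ ▸ hB.isFragment.ncard_outerBoundary_le U hU hU'
  have hsingle : ∀ U : Set V, U.Finite → U.Nonempty → ¬ G.outerBoundary U ⊆ {q} :=
    fun U hU hU' hsub => by
      have := Set.ncard_le_ncard hsub (Set.finite_singleton q)
      have := htwo U hU hU'
      rw [Set.ncard_singleton] at *
      omega
  set W := ⋃₀ {H | G.IsAtomInterval B q H}
  have hW : G.outerBoundary W ⊆ {q} := hG.outerBoundary_sUnion_isAtomInterval_subset hB hκ
  have hBW : B ⊆ W := Set.subset_sUnion_of_mem (isAtomInterval_self hB hκ hq)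
  have hqW : q ∉ W := fun ⟨_, hH, hqH⟩ => hH.mem_outerBoundary.1 hqH
  have hWinf : W.Infinite := fun hWfin => hsingle W hWfin (hB.isFragment.nonempty.mono hBW) hW
  set Z := (insert q W)ᶜ
  have hZ : G.outerBoundary Z ⊆ {q} := by
    rintro v ⟨hvZ, z, hzZ, hadj⟩
    rcases not_not.1 hvZ with rfl | hvW
    · rfl
    · exact absurd (hW ⟨fun h => hzZ (Or.inr h), v, hvW, hadj.symm⟩) fun h => hzZ (Or.inl h)
  rcases Z.finite_or_infinite with hZfin | hZinf
  · -- then `Z = ∅`, some interval `H` contains all neighbours of `q`, and `insert q H` has a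
    -- boundary of size at most one
    have hZe : Z = ∅ := Set.not_nonempty_iff_eq_empty.1 fun hZ' => hsingle Z hZfin hZ' hZ
    have hNW : G.neighborSet q ⊆ W := fun v hv => by
      by_contra hvW
      have : v ∈ Z := fun h => h.elim (fun h => G.ne_of_adj hv h.symm) hvW
      simp [hZe] at this
    obtain ⟨H, hH, hNH⟩ := exists_isAtomInterval_superset hB hκ hq (G.neighborSet q).toFinite hNW
    have hsub : G.outerBoundary (insert q H) ⊆ G.outerBoundary H \ {q} := by
      rintro v ⟨hv, u, rfl | hu, hadj⟩
      · exact absurd (Or.inr (hNH hadj)) hv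
      · exact ⟨⟨fun h => hv (Or.inr h), u, hu, hadj⟩, fun h => hv (Or.inl h)⟩
    have := Set.ncard_le_ncard hsub (outerBoundary_finite hH.finite).sdiff
    have := Set.ncard_sdiff_singleton_add_one hH.mem_outerBoundary (outerBoundary_finite hH.finite)
    have := htwo _ (hH.finite.insert q) (Set.insert_nonempty q H)
    have := hH.ncard_outerBoundary_le
    omega
  · refine not_disjoint_of_outerBoundary_subset hconn.preconnected hend (Set.finite_singleton q)
      (Set.disjoint_singleton_right.2 hqW) hW hWinf
      (Set.disjoint_singleton_right.2 (not_not.2 (Set.mem_insert q W))) hZ hZinf ?_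
    exact Set.disjoint_right.2 fun _ hvZ hvW => hvZ (Or.inr hvW)

end TwoSeparator

theorem IsVertexTransitive.three_le_ncard_outerBoundary [G.LocallyFinite] [Infinite V]
    (hG : G.IsVertexTransitive) (hconn : G.Connected) (hend : Subsingleton G.end)
    (hU : U.Finite) (hU' : U.Nonempty) : 3 ≤ (G.outerBoundary U).ncard := by
  obtain ⟨B, hB⟩ := exists_isAtom (G := G) hU hU'
  have := hB.isFragment.ncard_outerBoundary_le U hU hU'
  have := hG.two_le_ncard_outerBoundary hconn hB
  have := hG.ncard_outerBoundary_ne_two hconn hend hB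
  omega

theorem IsVertexTransitive.connected_induce_compl [G.LocallyFinite] [Infinite V]
    (hG : G.IsVertexTransitive) (hconn : G.Connected) (hend : Subsingleton G.end)
    (hA : A.Finite) (hA2 : A.ncard ≤ 2) : (G.induce Aᶜ).Connected := by
  have hinf : ∀ C : G.ComponentCompl A, C.supp.Infinite := fun C hC => by
    have := hG.three_le_ncard_outerBoundary hconn hend hC C.nonempty
    have := Set.ncard_le_ncard C.outerBoundary_supp_subset hA
    omega
  refine (connected_iff _).2 ⟨fun u v => ?_, hA.infinite_compl.nonempty.to_subtype⟩
  exact ConnectedComponent.exact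
    (ComponentCompl.eq_of_supp_infinite hconn.preconnected hend hA (hinf _) (hinf _))

section Cayley

variable {Γ : Type*} [Group Γ] {S : Set Γ}

lemma fromRel_eq_mulCayley (S : Set Γ) :
    fromRel (fun g h : Γ => ∃ s ∈ S, h = g * s) = mulCayley S := by
  simp only [mulCayley, eq_comm]

def mulCayleyMulLeft (S : Set Γ) (g : Γ) : mulCayley S ≃g mulCayley S where
  toEquiv := Equiv.mulLeft g
  map_rel_iff' := mulCayley_adj_mul_iff_right

@[simp]
lemma mulCayleyMulLeft_apply (g x : Γ) : mulCayleyMulLeft S g x = g * x := rfl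

lemma isVertexTransitive_mulCayley (S : Set Γ) : (mulCayley S).IsVertexTransitive :=
  fun x y => ⟨mulCayleyMulLeft S (y * x⁻¹), by simp⟩

lemma finite_neighborSet_mulCayley (hS : S.Finite) (v : Γ) :
    ((mulCayley S).neighborSet v).Finite := by
  refine ((hS.union hS.inv).image (v * ·)).subset fun w hw => ⟨v⁻¹ * w, ?_, by simp⟩
  rw [mem_neighborSet, mulCayley_adj] at hw
  rcases hw.2 with h | h
  · exact Or.inl h
  · exact Or.inr (by simpa using h)

noncomputable instance (S : Finset Γ) : (mulCayley (S : Set Γ)).LocallyFinite :=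
  fun v => (finite_neighborSet_mulCayley S.finite_toSet v).fintype

lemma mulCayley_connected (hS : Subgroup.closure S = ⊤) : (mulCayley S).Connected := by
  have hreach : ∀ g, (mulCayley S).Reachable 1 g := fun g => by
    induction (hS ▸ Subgroup.mem_top g : g ∈ Subgroup.closure S) using
      Subgroup.closure_induction with
    | mem x hx =>
      by_cases hx1 : x = 1
      · rw [hx1]
      · exact Adj.reachable ((mulCayley_adj' S 1 x).2 ⟨Ne.symm hx1, x, hx, Or.inl (one_mul x)⟩)
    | one => rfl
    | mul x y _ _ hx hy => exact hx.trans (by simpa using hy.map (mulCayleyMulLeft S x).toHom)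
    | inv x _ hx =>
      have : (mulCayley S).Reachable x⁻¹ 1 := by
        simpa using hx.map (mulCayleyMulLeft S x⁻¹).toHom
      exact this.symm
  refine (connected_iff _).2 ⟨fun u v => ?_, ⟨1⟩⟩
  simpa using (hreach (u⁻¹ * v)).map (mulCayleyMulLeft S u).toHom

end Cayley

end SimpleGraph

theorem stmt_14_general {Γ : Type*} [Group Γ] [Infinite Γ] (S : Finset Γ)
    (hgen : Subgroup.closure (S : Set Γ) = ⊤)
    (hend2 : Subsingleton (SimpleGraph.fromRel (fun g h : Γ => ∃ s ∈ S, h = g * s)).end) :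
    ∀ A : Set Γ, A.Finite → A.ncard ≤ 2 →
      (SimpleGraph.induce Aᶜ (SimpleGraph.fromRel (fun g h : Γ => ∃ s ∈ S, h = g * s))).Connected := by
  have hG : SimpleGraph.fromRel (fun g h : Γ => ∃ s ∈ S, h = g * s) =
      SimpleGraph.mulCayley (S : Set Γ) :=
    SimpleGraph.fromRel_eq_mulCayley _
  rw [hG] at hend2 ⊢
  exact fun A hA hA2 => (SimpleGraph.isVertexTransitive_mulCayley _).connected_induce_compl
    (SimpleGraph.mulCayley_connected hgen) hend2 hA hA2

/-- A finitely generated Cayley graph of an infinite group which is 1-ended is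
3-connected: removing any set of at most 2 vertices leaves it connected. -/
theorem stmt_14 {Γ : Type*} [Group Γ] [Infinite Γ] (S : Finset Γ)
    (hgen : Subgroup.closure (S : Set Γ) = ⊤)
    (hend1 : Nonempty (SimpleGraph.fromRel (fun g h : Γ => ∃ s ∈ S, h = g * s)).end)
    (hend2 : Subsingleton (SimpleGraph.fromRel (fun g h : Γ => ∃ s ∈ S, h = g * s)).end) :
    ∀ A : Set Γ, A.Finite → A.ncard ≤ 2 →
      (SimpleGraph.induce Aᶜ (SimpleGraph.fromRel (fun g h : Γ => ∃ s ∈ S, h = g * s))).Connected :=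
  stmt_14_general S hgen hend2
end
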